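/- Let V be a real Hilbert space, A : V → V SPD and invertible, and u, u_h ∈ V with residual r = A(u - u_h). Suppose B : V → V satisfies the contraction property ‖I - BA‖_A ≤ δ < 1 in the A-operator norm. Then (1/(1+δ))‖Br‖_A ≤ ‖u - u_h‖_A ≤ (1/(1-δ))‖Br‖_A. -/

import Mathlib

/-!
The form `⟪A x, y⟫` is a pre-inner product on `V`, so the `A`-norm is a seminorm. Writing
`e = u - u_h`, we have `B r = B (A e)`, so the contraction hypothesis says that `B r` lies within
`δ ‖e‖_A` of `e`; the triangle inequality then gives `(1 - δ) ‖e‖_A ≤ ‖B r‖_A ≤ (1 + δ) ‖e‖_A`.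
-/

open scoped RealInnerProductSpace

noncomputable def anorm {V : Type*} [NormedAddCommGroup V] [InnerProductSpace ℝ V]
    (A : V →L[ℝ] V) (x : V) : ℝ := Real.sqrt ⟪A x, x⟫

section SeminormComparison

variable {F E : Type*} [AddGroup E] [FunLike F E ℝ] [AddGroupSeminormClass F E ℝ] (p : F)
  {x y : E} {δ : ℝ}

theorem map_le_one_add_mul_of_map_sub_le (h : p (x - y) ≤ δ * p x) : p y ≤ (1 + δ) * p x := by
  linarith [le_map_add_map_sub' p y x]

theorem one_sub_mul_le_of_map_sub_le (h : p (x - y) ≤ δ * p x) : (1 - δ) * p x ≤ p y := by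
  linarith [le_map_add_map_sub p x y]

end SeminormComparison

namespace ContinuousLinearMap.IsPositive

variable {V : Type*} [NormedAddCommGroup V] [InnerProductSpace ℝ V] {A : V →L[ℝ] V}

abbrev preInnerProductSpaceCore (hA : A.IsPositive) : PreInnerProductSpace.Core ℝ V where
  inner x y := ⟪A x, y⟫
  conj_inner_symm x y := by simp [hA.inner_left_eq_inner_right x y, real_inner_comm]
  re_inner_nonneg := hA.inner_nonneg_left
  add_left x y z := by simp [inner_add_left]
  smul_left x y r := by simp [real_inner_smul_left]

noncomputable def anormAddGroupSeminorm (hA : A.IsPositive) : AddGroupSeminorm V where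
  toFun := anorm A
  map_zero' := by simp [anorm]
  -- `anorm A x` is by definition the norm induced by `hA.preInnerProductSpaceCore`.
  add_le' := @norm_add_le V (@InnerProductSpace.Core.toSeminormedAddCommGroup ℝ V _ _ _
    hA.preInnerProductSpaceCore).toSeminormedAddGroup
  neg' x := by simp [anorm]

@[simp]
theorem anormAddGroupSeminorm_apply (hA : A.IsPositive) (x : V) :
    hA.anormAddGroupSeminorm x = anorm A x := rfl

end ContinuousLinearMap.IsPositive

theorem stmt14_general {V : Type*} [NormedAddCommGroup V] [InnerProductSpace ℝ V]
    (A B : V →L[ℝ] V)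
    (hsym : ∀ v w : V, ⟪A v, w⟫ = ⟪v, A w⟫)
    (hpos : ∀ v : V, v ≠ 0 → 0 < ⟪A v, v⟫)
    (δ : ℝ) (hδ0 : 0 ≤ δ) (hδ1 : δ < 1)
    (hcontr : ∀ v : V, anorm A (v - B (A v)) ≤ δ * anorm A v)
    (u u_h r : V) (hr : r = A (u - u_h)) :
    (1 / (1 + δ)) * anorm A (B r) ≤ anorm A (u - u_h) ∧
    anorm A (u - u_h) ≤ (1 / (1 - δ)) * anorm A (B r) := by
  have hA : A.IsPositive := ⟨hsym, fun v => by
    rcases eq_or_ne v 0 with rfl | hv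
    · simp [ContinuousLinearMap.reApplyInnerSelf_apply]
    · simpa [ContinuousLinearMap.reApplyInnerSelf_apply] using (hpos v hv).le⟩
  have hclose : hA.anormAddGroupSeminorm (u - u_h - B r) ≤
      δ * hA.anormAddGroupSeminorm (u - u_h) := by
    simpa [hr] using hcontr (u - u_h)
  constructor
  · rw [one_div_mul_eq_div, div_le_iff₀ (by linarith), mul_comm]
    simpa using map_le_one_add_mul_of_map_sub_le _ hclose
  · rw [one_div_mul_eq_div, le_div_iff₀ (by linarith), mul_comm]
    simpa using one_sub_mul_le_of_map_sub_le _ hclose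

theorem stmt14 {V : Type*} [NormedAddCommGroup V] [InnerProductSpace ℝ V] [CompleteSpace V]
    (A Ainv B : V →L[ℝ] V)
    (hsym : ∀ v w : V, ⟪A v, w⟫ = ⟪v, A w⟫)
    (hpos : ∀ v : V, v ≠ 0 → 0 < ⟪A v, v⟫)
    (hAinv1 : ∀ v, Ainv (A v) = v) (hAinv2 : ∀ v, A (Ainv v) = v)
    (δ : ℝ) (hδ0 : 0 ≤ δ) (hδ1 : δ < 1)
    (hcontr : ∀ v : V, anorm A (v - B (A v)) ≤ δ * anorm A v)
    (u u_h r : V) (hr : r = A (u - u_h)) :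
    (1 / (1 + δ)) * anorm A (B r) ≤ anorm A (u - u_h) ∧
    anorm A (u - u_h) ≤ (1 / (1 - δ)) * anorm A (B r) :=
  stmt14_general A B hsym hpos δ hδ0 hδ1 hcontr u u_h r hr
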